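/- arXiv:2107.14670 — 2 statements merged into one kernel-verified Lean document; each statement's English description precedes it below -/
import Mathlib

section
/- For m ≥ 2 and θ' := mπ/2 − θ ∈ (0, π/2], the quantity (m−1)·sin²(θ'/(m−1)) − m·sin²(θ'/m) is non-negative. -/
/-!
Write `T = mπ/2 − θ ∈ (0, π/2]` and `g u = (1 − cos u) / u`. Since `sin² x = (1 − cos 2x)/2`,
`n sin²(T/n) = T · g(2T/n)`, so the claim is `g(2T/m) ≤ g(2T/(m−1))` with `2T/m ≤ π/2` and
`2T/(m−1) ≤ π`. On `(0, π/2]`, `g` is the slope of the secant of the convex function `1 − cos`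
through the origin, hence monotone, and bounded by `g(π/2) = 2/π`; on `[π/2, π]`, Jordan's
inequality gives `g ≥ 2/π`.
-/

open Real Set

theorem convexOn_one_sub_cos_Icc : ConvexOn ℝ (Icc 0 (π / 2)) (fun u => 1 - cos u) :=
  (convexOn_const 1 (convex_Icc _ _)).sub <|
    strictConcaveOn_cos_Icc.concaveOn.subset (Icc_subset_Icc (by linarith [pi_pos]) le_rfl)
      (convex_Icc _ _)

theorem monotoneOn_one_sub_cos_div : MonotoneOn (fun u => (1 - cos u) / u) (Ioc 0 (π / 2)) := by
  intro u hu v hv huv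
  have hzero : (0 : ℝ) ∈ Icc 0 (π / 2) := ⟨le_rfl, by linarith [pi_pos]⟩
  simpa using convexOn_one_sub_cos_Icc.secant_mono hzero (Ioc_subset_Icc_self hu)
    (Ioc_subset_Icc_self hv) hu.1.ne' hv.1.ne' huv

theorem two_div_pi_mul_le_one_sub_cos {v : ℝ} (h₁ : π / 2 ≤ v) (h₂ : v ≤ π) :
    2 / π * v ≤ 1 - cos v := by
  have hJordan := mul_le_sin (sub_nonneg.2 h₁) (by linarith : v - π / 2 ≤ π / 2)
  rw [sin_sub_pi_div_two] at hJordan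
  have : 2 / π * (v - π / 2) = 2 / π * v - 1 := by field_simp
  linarith

theorem one_sub_cos_div_le_one_sub_cos_div {u v : ℝ} (hu : 0 < u) (huv : u ≤ v)
    (hu' : u ≤ π / 2) (hv : v ≤ π) : (1 - cos u) / u ≤ (1 - cos v) / v := by
  have hπ : 0 < π / 2 := by linarith [pi_pos]
  rcases le_or_gt v (π / 2) with hv' | hv'
  · exact monotoneOn_one_sub_cos_div ⟨hu, hu'⟩ ⟨hu.trans_le huv, hv'⟩ huv
  calc (1 - cos u) / u ≤ (1 - cos (π / 2)) / (π / 2) :=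
        monotoneOn_one_sub_cos_div ⟨hu, hu'⟩ ⟨hπ, le_rfl⟩ hu'
    _ = 2 / π := by rw [cos_pi_div_two, sub_zero, one_div_div]
    _ ≤ (1 - cos v) / v := by
        rw [le_div_iff₀ (hπ.trans hv')]
        exact two_div_pi_mul_le_one_sub_cos hv'.le hv

theorem mul_sin_sq_div_eq {T s : ℝ} (hT : T ≠ 0) (hs : s ≠ 0) :
    s * sin (T / s) ^ 2 = T * ((1 - cos (2 * T / s)) / (2 * T / s)) := by
  rw [sin_sq_eq_half_sub, mul_div_assoc 2 T s]
  field_simp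

theorem mul_sin_sq_div_le_of_le {T s t : ℝ} (hT : 0 < T) (hs : 0 < s) (hst : s ≤ t)
    (ht : T / t ≤ π / 4) (hs' : T / s ≤ π / 2) :
    t * sin (T / t) ^ 2 ≤ s * sin (T / s) ^ 2 := by
  rw [mul_sin_sq_div_eq hT.ne' hs.ne', mul_sin_sq_div_eq hT.ne' (hs.trans_le hst).ne']
  refine mul_le_mul_of_nonneg_left (one_sub_cos_div_le_one_sub_cos_div ?_ ?_ ?_ ?_) hT.le
  · exact div_pos (by positivity) (hs.trans_le hst)
  · exact div_le_div_of_nonneg_left (by positivity) hs hst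
  · rw [mul_div_assoc]; linarith
  · rw [mul_div_assoc]; linarith

/-- For m ≥ 2 and θ' := mπ/2 − θ ∈ (0, π/2], the quantity
(m−1)·sin²(θ'/(m−1)) − m·sin²(θ'/m) is non-negative. -/
theorem sin_sq_boundary_ineq (m : ℕ) (hm : 2 ≤ m) (θ : ℝ)
    (hθ₁ : ((m : ℝ) - 1) * π / 2 ≤ θ) (hθ₂ : θ < m * π / 2) :
    0 ≤ ((m : ℝ) - 1) * Real.sin ((m * π / 2 - θ) / ((m : ℝ) - 1)) ^ 2
        - m * Real.sin ((m * π / 2 - θ) / m) ^ 2 := by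
  have hm' : (2 : ℝ) ≤ m := by exact_mod_cast hm
  set T := (m : ℝ) * π / 2 - θ with hT_def
  have hT : 0 < T := by linarith
  have hTπ : T ≤ π / 2 := by linarith
  have hTm : T / m ≤ π / 4 := by
    rw [div_le_iff₀ (by linarith)]; nlinarith [pi_pos]
  have hTm₁ : T / ((m : ℝ) - 1) ≤ π / 2 := by
    rw [div_le_iff₀ (by linarith)]; nlinarith [pi_pos]
  linarith [mul_sin_sq_div_le_of_le hT (by linarith) (by linarith) hTm hTm₁]
end

section
/- Let f : [0,∞) → ℝ be C² with |ḟ| ≤ 1 and f̈ ≥ (1−ε)(1 − ḟ²) for some 0 < ε < 1, where f(t) → ∞ as t → ∞. Then there exists a > 0 such that ḟ(t) ≥ tanh((1−ε)(t−a)) for all sufficiently large t; in particular 1 − ḟ(t)² decays exponentially. -/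
open Real Filter

lemma tanh_le_aux (y u : ℝ) (hy : y ≤ 1) (hy' : 0 < 1 + y)
    (h : (1 - y) / (1 + y) ≤ Real.exp (-2 * u)) : Real.tanh u ≤ y := by
  rw [Real.tanh_eq_sinh_div_cosh, Real.sinh_eq, Real.cosh_eq]
  rw [div_le_iff₀ (by positivity)]
  have h' : (1 - y) ≤ Real.exp (-2 * u) * (1 + y) := (div_le_iff₀ hy').mp h
  have hexp : Real.exp (-2 * u) * Real.exp u = Real.exp (-u) := by
    rw [← Real.exp_add]; ring_nf
  have epos : 0 < Real.exp u := Real.exp_pos u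
  nlinarith [mul_le_mul_of_nonneg_right h' epos.le, Real.exp_pos (-u)]

/-- If f : [0,∞) → ℝ is C² with |ḟ| ≤ 1, f̈ ≥ (1−ε)(1 − ḟ²) and f(t) → ∞, then there exists
a > 0 with ḟ(t) ≥ tanh((1−ε)(t−a)) for large t; in particular 1 − ḟ² decays exponentially. -/
theorem asymptotically_vertical (ε : ℝ) (hε₀ : 0 < ε) (hε₁ : ε < 1) (f f' f'' : ℝ → ℝ)
    (hd1 : ∀ t, 0 ≤ t → HasDerivAt f (f' t) t)
    (hd2 : ∀ t, 0 ≤ t → HasDerivAt f' (f'' t) t)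
    (hcont : ContinuousOn f'' (Set.Ici 0))
    (hlip : ∀ t, 0 ≤ t → |f' t| ≤ 1)
    (hineq : ∀ t, 0 ≤ t → (1 - ε) * (1 - f' t ^ 2) ≤ f'' t)
    (hunb : Tendsto f atTop atTop) :
    ∃ a : ℝ, 0 < a ∧ (∀ᶠ t in atTop, Real.tanh ((1 - ε) * (t - a)) ≤ f' t) ∧
      ∃ C c : ℝ, 0 < C ∧ 0 < c ∧ ∀ᶠ t in atTop, 1 - f' t ^ 2 ≤ C * Real.exp (-c * t) := by
  set k : ℝ := 2 * (1 - ε) with hk_def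
  have hk : 0 < k := by simp [hk_def]; linarith
  have hsq : ∀ t, 0 ≤ t → f' t ^ 2 ≤ 1 := by
    intro t ht
    have := abs_le.mp (hlip t ht)
    nlinarith [this.1, this.2]
  have hle1 : ∀ t, 0 ≤ t → f' t ≤ 1 := fun t ht => (abs_le.mp (hlip t ht)).2
  -- f' is monotone on [0,∞)
  have hmono : MonotoneOn f' (Set.Ici (0:ℝ)) := by
    apply monotoneOn_of_deriv_nonneg (convex_Ici 0)
    · intro x hx
      exact (hd2 x hx).continuousAt.continuousWithinAt
    · intro x hx
      rw [interior_Ici] at hx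
      exact (hd2 x hx.le).differentiableAt.differentiableWithinAt
    · intro x hx
      rw [interior_Ici] at hx
      rw [(hd2 x hx.le).deriv]
      have := hineq x hx.le
      have := hsq x hx.le
      nlinarith
  -- there is t₀ ≥ 0 with f' t₀ > 0
  obtain ⟨t₀, ht₀0, hpos⟩ : ∃ t₀, 0 ≤ t₀ ∧ 0 < f' t₀ := by
    by_contra h
    push_neg at h
    have hant : AntitoneOn f (Set.Ici (0:ℝ)) := by
      apply antitoneOn_of_deriv_nonpos (convex_Ici 0)
      · intro x hx
        exact (hd1 x hx).continuousAt.continuousWithinAt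
      · intro x hx
        rw [interior_Ici] at hx
        exact (hd1 x hx.le).differentiableAt.differentiableWithinAt
      · intro x hx
        rw [interior_Ici] at hx
        rw [(hd1 x hx.le).deriv]
        exact h x hx.le
    obtain ⟨t, ht1, ht2⟩ := ((hunb.eventually_gt_atTop (f 0)).and (eventually_ge_atTop (0:ℝ))).exists
    have := hant (Set.self_mem_Ici) (Set.mem_Ici.mpr ht2) ht2
    linarith
  have hden : ∀ t, t₀ ≤ t → 0 < 1 + f' t := by
    intro t ht
    have h1 := hmono (Set.mem_Ici.mpr ht₀0) (Set.mem_Ici.mpr (ht₀0.trans ht)) ht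
    linarith
  set q : ℝ → ℝ := fun t => (1 - f' t) / (1 + f' t) with hq_def
  set G : ℝ → ℝ := fun t => q t * Real.exp (k * t) with hG_def
  set D : ℝ → ℝ := fun x =>
    ((0 - f'' x) * (1 + f' x) - (1 - f' x) * (0 + f'' x)) / (1 + f' x) ^ 2 * Real.exp (k * x)
      + (1 - f' x) / (1 + f' x) * (Real.exp (k * x) * (k * 1)) with hD_def
  have hGD : ∀ x, t₀ ≤ x → HasDerivAt G (D x) x := by
    intro x hx
    have hx0 : 0 ≤ x := ht₀0.trans hx
    have hne : (1 + f' x) ≠ 0 := (hden x hx).ne'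
    have h1 : HasDerivAt (fun t => 1 - f' t) (0 - f'' x) x :=
      (hasDerivAt_const x 1).sub (hd2 x hx0)
    have h2 : HasDerivAt (fun t => 1 + f' t) (0 + f'' x) x :=
      (hasDerivAt_const x 1).add (hd2 x hx0)
    have hq' : HasDerivAt (fun t => (1 - f' t) / (1 + f' t))
        (((0 - f'' x) * (1 + f' x) - (1 - f' x) * (0 + f'' x)) / (1 + f' x) ^ 2) x :=
      h1.div h2 hne
    have hE : HasDerivAt (fun t => Real.exp (k * t)) (Real.exp (k * x) * (k * 1)) x :=
      (Real.hasDerivAt_exp (k * x)).comp x ((hasDerivAt_id x).const_mul k)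
    exact hq'.mul hE
  have hDneg : ∀ x, t₀ ≤ x → D x ≤ 0 := by
    intro x hx
    have hx0 : 0 ≤ x := ht₀0.trans hx
    have hp : 0 < 1 + f' x := hden x hx
    have hne : (1 + f' x) ≠ 0 := hp.ne'
    have key := hineq x hx0
    have hEpos : 0 < Real.exp (k * x) := Real.exp_pos _
    have hexpand : D x = (Real.exp (k * x) / (1 + f' x) ^ 2) *
        (2 * (1 - ε) * (1 - f' x ^ 2) - 2 * f'' x) := by
      simp only [hD_def, hk_def]
      field_simp
      ring
    rw [hexpand]
    apply mul_nonpos_of_nonneg_of_nonpos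
    · positivity
    · nlinarith
  have hAnti : AntitoneOn G (Set.Ici t₀) := by
    apply antitoneOn_of_deriv_nonpos (convex_Ici t₀)
    · intro x hx
      exact (hGD x hx).continuousAt.continuousWithinAt
    · intro x hx
      rw [interior_Ici] at hx
      exact (hGD x hx.le).differentiableAt.differentiableWithinAt
    · intro x hx
      rw [interior_Ici] at hx
      rw [(hGD x hx.le).deriv]
      exact hDneg x hx.le
  have hGle : ∀ t, t₀ ≤ t → q t * Real.exp (k * t) ≤ q t₀ * Real.exp (k * t₀) := by
    intro t ht
    exact hAnti Set.self_mem_Ici (Set.mem_Ici.mpr ht) ht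
  have hq0 : 0 ≤ q t₀ := by
    apply div_nonneg
    · have := hle1 t₀ ht₀0; linarith
    · exact (hden t₀ le_rfl).le
  have hqnn : ∀ t, t₀ ≤ t → 0 ≤ q t := by
    intro t ht
    apply div_nonneg
    · have := hle1 t (ht₀0.trans ht); linarith
    · exact (hden t ht).le
  set M : ℝ := max (q t₀) 1 with hM_def
  have hM1 : (1:ℝ) ≤ M := le_max_right _ _
  have hMpos : 0 < M := by linarith
  set a : ℝ := t₀ + 1 + Real.log M / k with ha_def
  have hlogM : 0 ≤ Real.log M := Real.log_nonneg hM1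
  have ha : 0 < a := by
    have : 0 ≤ Real.log M / k := div_nonneg hlogM hk.le
    simp only [ha_def]; linarith
  -- key bound : q t₀ * exp (k t₀) ≤ exp (k a)
  have hkey : q t₀ * Real.exp (k * t₀) ≤ Real.exp (k * a) := by
    have h1 : Real.exp (k * a) = Real.exp (k * t₀) * Real.exp k * M := by
      rw [show k * a = k * t₀ + k + k * (Real.log M / k) by simp only [ha_def]; ring,
        Real.exp_add, Real.exp_add]
      congr 1
      rw [mul_div_cancel₀ _ hk.ne', Real.exp_log hMpos]
    rw [h1]
    have h2 : (1:ℝ) ≤ Real.exp k := by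
      rw [← Real.exp_zero]; exact Real.exp_le_exp.mpr hk.le
    have h3 : q t₀ ≤ M := le_max_left _ _
    calc q t₀ * Real.exp (k * t₀) ≤ M * Real.exp (k * t₀) :=
          mul_le_mul_of_nonneg_right h3 (Real.exp_pos _).le
      _ ≤ M * Real.exp (k * t₀) * Real.exp k :=
          le_mul_of_one_le_right (by positivity) h2
      _ = Real.exp (k * t₀) * Real.exp k * M := by ring
  have hqbound : ∀ t, t₀ ≤ t → q t ≤ Real.exp (k * a - k * t) := by
    intro t ht
    rw [Real.exp_sub, le_div_iff₀ (Real.exp_pos _)]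
    exact (hGle t ht).trans hkey
  refine ⟨a, ha, ?_, ?_⟩
  · filter_upwards [eventually_ge_atTop t₀] with t ht
    apply tanh_le_aux _ _ (hle1 t (ht₀0.trans ht)) (hden t ht)
    have := hqbound t ht
    rw [show -2 * ((1 - ε) * (t - a)) = k * a - k * t by simp only [hk_def]; ring]
    exact this
  · refine ⟨4 * (q t₀ * Real.exp (k * t₀)) + 1, k, by nlinarith [Real.exp_pos (k * t₀)], hk, ?_⟩
    filter_upwards [eventually_ge_atTop t₀] with t ht
    have hp : 0 < 1 + f' t := hden t ht
    have hqt : q t * (1 + f' t) = 1 - f' t := div_mul_cancel₀ _ hp.ne'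
    have hf1 : f' t ≤ 1 := hle1 t (ht₀0.trans ht)
    have hqn : 0 ≤ q t := hqnn t ht
    have h4 : 1 - f' t ^ 2 ≤ 4 * q t := by nlinarith
    have h5 : q t ≤ q t₀ * Real.exp (k * t₀) * Real.exp (-k * t) := by
      calc q t = q t * Real.exp (k * t) / Real.exp (k * t) := by
            field_simp
        _ ≤ q t₀ * Real.exp (k * t₀) / Real.exp (k * t) :=
            (div_le_div_iff_of_pos_right (Real.exp_pos _)).mpr (hGle t ht)
        _ = q t₀ * Real.exp (k * t₀) * Real.exp (-k * t) := by
            rw [show -k * t = -(k * t) by ring, Real.exp_neg]; ring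
    nlinarith [Real.exp_pos (-k * t), Real.exp_pos (k * t₀)]
end
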